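/- arXiv:2409.06283 — 2 statements merged into one kernel-verified Lean document; each statement's English description precedes it below -/
import Mathlib

section
/- Let x, y be natural numbers, t ∈ [0, 1], and B, b, Cc, c ≥ 0 real numbers with b² ≤ B + b² ≤ Φ and c² ≤ Cc + c² ≤ Φ for some Φ ≥ 1, where B, Cc ≤ Φ. Then t^{(x+y)/2} · ((B + b²)^{x/2} (Cc + c²)^{y/2} − b^x c^y) ≤ (x + y) · t^{1/2} · Φ^{(x+y)/2}. -/
theorem product_difference_bound (x y : ℕ) (t B b Cc c Φ : ℝ)
    (ht : t ∈ Set.Icc (0 : ℝ) 1)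
    (hB : 0 ≤ B) (hb : 0 ≤ b) (hCc : 0 ≤ Cc) (hc : 0 ≤ c) (hΦ : 1 ≤ Φ)
    (hb1 : b ^ 2 ≤ B + b ^ 2) (hb2 : B + b ^ 2 ≤ Φ)
    (hc1 : c ^ 2 ≤ Cc + c ^ 2) (hc2 : Cc + c ^ 2 ≤ Φ)
    (hBΦ : B ≤ Φ) (hCcΦ : Cc ≤ Φ) :
    t ^ (((x : ℝ) + y) / 2) *
        ((B + b ^ 2) ^ ((x : ℝ) / 2) * (Cc + c ^ 2) ^ ((y : ℝ) / 2) - b ^ x * c ^ y) ≤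
      ((x : ℝ) + y) * t ^ ((1 : ℝ) / 2) * Φ ^ (((x : ℝ) + y) / 2) := by
  obtain ⟨ht0, ht1⟩ := ht
  have hΦ0 : (0:ℝ) ≤ Φ := le_trans zero_le_one hΦ
  have hA0 : (0:ℝ) ≤ B + b ^ 2 := by positivity
  have hC0 : (0:ℝ) ≤ Cc + c ^ 2 := by positivity
  have hbx : (b:ℝ) ^ x = (b ^ 2) ^ ((x:ℝ)/2) := by
    rw [← Real.rpow_natCast b x, ← Real.rpow_natCast b 2, ← Real.rpow_mul hb]
    congr 1
    push_cast
    ring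
  have hcy : (c:ℝ) ^ y = (c ^ 2) ^ ((y:ℝ)/2) := by
    rw [← Real.rpow_natCast c y, ← Real.rpow_natCast c 2, ← Real.rpow_mul hc]
    congr 1
    push_cast
    ring
  set D : ℝ := (B + b ^ 2) ^ ((x : ℝ) / 2) * (Cc + c ^ 2) ^ ((y : ℝ) / 2) - b ^ x * c ^ y
    with hD
  have hDpos : 0 ≤ D := by
    rw [hD, sub_nonneg, hbx, hcy]
    exact mul_le_mul (Real.rpow_le_rpow (by positivity) hb1 (by positivity))
      (Real.rpow_le_rpow (by positivity) hc1 (by positivity))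
      (Real.rpow_nonneg (by positivity) _) (Real.rpow_nonneg hA0 _)
  have hDle : D ≤ Φ ^ (((x:ℝ) + y) / 2) := by
    have h1 : (B + b ^ 2) ^ ((x : ℝ) / 2) * (Cc + c ^ 2) ^ ((y : ℝ) / 2)
        ≤ Φ ^ ((x:ℝ)/2) * Φ ^ ((y:ℝ)/2) :=
      mul_le_mul (Real.rpow_le_rpow hA0 hb2 (by positivity))
        (Real.rpow_le_rpow hC0 hc2 (by positivity))
        (Real.rpow_nonneg hC0 _) (Real.rpow_nonneg hΦ0 _)
    have h2 : Φ ^ ((x:ℝ)/2) * Φ ^ ((y:ℝ)/2) = Φ ^ (((x:ℝ) + y) / 2) := by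
      rw [← Real.rpow_add (lt_of_lt_of_le zero_lt_one hΦ)]
      ring_nf
    have hbc : 0 ≤ (b:ℝ) ^ x * c ^ y := by positivity
    rw [hD]
    linarith
  rcases Nat.eq_zero_or_pos (x + y) with hxy | hxy
  · obtain ⟨hx, hy⟩ := Nat.add_eq_zero.mp hxy
    subst hx; subst hy
    simp
    rw [hD]
    norm_num
  · have hxy1 : (1:ℝ) ≤ (x:ℝ) + y := by
      have h : (1:ℕ) ≤ x + y := hxy
      exact_mod_cast h
    have hΦs : 0 ≤ Φ ^ (((x:ℝ) + y) / 2) := Real.rpow_nonneg hΦ0 _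
    have ht2 : t ^ (((x:ℝ) + y) / 2) ≤ t ^ ((1:ℝ)/2) := by
      rcases eq_or_lt_of_le ht0 with h | h
      · rw [← h, Real.zero_rpow (by positivity), Real.zero_rpow (by positivity)]
      · exact Real.rpow_le_rpow_of_exponent_ge h ht1 (by linarith)
    calc t ^ (((x:ℝ) + y) / 2) * D ≤ t ^ ((1:ℝ)/2) * Φ ^ (((x:ℝ) + y) / 2) := by
          exact mul_le_mul ht2 hDle hDpos (Real.rpow_nonneg ht0 _)
      _ ≤ ((x:ℝ) + y) * t ^ ((1:ℝ)/2) * Φ ^ (((x:ℝ) + y) / 2) := by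
          have htp : 0 ≤ t ^ ((1:ℝ)/2) := Real.rpow_nonneg ht0 _
          nlinarith [mul_nonneg htp hΦs]
end

section
/- Let f : [0, T] → ℝ be continuous, differentiable on (0, T), with f(0) ≤ M and with the property that at any t ∈ (0, T) where f(t) ≥ M one has f'(t) ≤ K · f(t)^5 for constants K, M > 0. If 4 K T M^4 < 1/2, then f(t) ≤ M · (1 − 4 K t M^4)^{−1/4} for all t ∈ [0, T]. -/
/-!
For `δ > 0` the solution `g_δ` of `g' = (K + δ) g⁵`, `g(0) = M + δ` is a strict barrier for `f`:
`f` starts strictly below it, and at a first touching point `f = g_δ ≥ M` we would have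
`f' ≤ K f⁵ < (K + δ) g_δ⁵ = g_δ'`, which is impossible. Hence `f ≤ g_δ` on `[0, T]`, and letting
`δ → 0` gives the bound by the solution of `g' = K g⁵`, `g(0) = M`.
-/

open Set Filter Topology

theorem image_le_of_deriv_lt_deriv_boundary_of_lt {f f' B B' : ℝ → ℝ} {a b : ℝ}
    (hf : ContinuousOn f (Icc a b)) (hf' : ∀ x ∈ Ioo a b, HasDerivAt f (f' x) x)
    (hB : ContinuousOn B (Icc a b)) (hB' : ∀ x ∈ Ioo a b, HasDerivAt B (B' x) x)
    (ha : f a < B a) (bound : ∀ x ∈ Ioo a b, f x = B x → f' x < B' x) :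
    ∀ x ∈ Icc a b, f x ≤ B x := by
  rintro x ⟨hax, hxb⟩
  rcases hax.eq_or_lt with rfl | hax
  · exact ha.le
  -- No derivative is available at `a`, so the fencing argument starts at a nearby `a' > a`.
  have hstart : ∀ᶠ y in 𝓝[Ioo a x] a, f y < B y :=
    nhdsWithin_mono a (Ioo_subset_Icc_self.trans (Icc_subset_Icc_right hxb))
      ((hf.continuousWithinAt (left_mem_Icc.2 (hax.le.trans hxb))).eventually_lt
        (hB.continuousWithinAt (left_mem_Icc.2 (hax.le.trans hxb))) ha)
  have := left_nhdsWithin_Ioo_neBot hax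
  obtain ⟨a', ha'B, haa', ha'x⟩ := (hstart.and self_mem_nhdsWithin).exists
  have hIcc : Icc a' x ⊆ Icc a b := Icc_subset_Icc haa'.le hxb
  have hIco : Ico a' x ⊆ Ioo a b := fun y hy => ⟨haa'.trans_le hy.1, hy.2.trans_le hxb⟩
  exact image_le_of_deriv_right_lt_deriv_boundary' (hf.mono hIcc)
    (fun y hy => (hf' y (hIco hy)).hasDerivWithinAt) ha'B.le (hB.mono hIcc)
    (fun y hy => (hB' y (hIco hy)).hasDerivWithinAt) (fun y hy => bound y (hIco hy))
    (right_mem_Icc.2 ha'x.le)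

/-- The solution of `g' = k g⁵` with `g 0 = c`, defined while `4 k t c⁴ < 1`. -/
noncomputable def odeBarrier (k c t : ℝ) : ℝ :=
  c * (1 - 4 * k * t * c ^ 4) ^ (-(1 : ℝ) / 4)

theorem odeBarrier_zero (k c : ℝ) : odeBarrier k c 0 = c := by
  simp [odeBarrier]

theorem hasDerivAt_odeBarrier {k c t : ℝ} (ht : 0 < 1 - 4 * k * t * c ^ 4) :
    HasDerivAt (odeBarrier k c) (k * odeBarrier k c t ^ 5) t := by
  have hbase : HasDerivAt (fun s : ℝ => 1 - 4 * k * s * c ^ 4) (-(4 * k * c ^ 4)) t := by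
    simpa using ((((hasDerivAt_id t).const_mul (4 * k)).mul_const (c ^ 4)).const_sub 1)
  refine ((hbase.rpow_const (p := -(1 : ℝ) / 4) (Or.inl ht.ne')).const_mul c).congr_deriv ?_
  have hpow : odeBarrier k c t ^ 5 = c ^ 5 * (1 - 4 * k * t * c ^ 4) ^ (-(1 : ℝ) / 4 - 1) := by
    rw [odeBarrier, mul_pow, ← Real.rpow_natCast ((1 - 4 * k * t * c ^ 4) ^ (-(1 : ℝ) / 4)) 5,
      ← Real.rpow_mul ht.le]
    norm_num
  rw [hpow]
  ring

theorem le_odeBarrier {k c t : ℝ} (hk : 0 ≤ k) (hc : 0 ≤ c) (ht : 0 ≤ t)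
    (hpos : 0 < 1 - 4 * k * t * c ^ 4) : c ≤ odeBarrier k c t := by
  have hle : 1 - 4 * k * t * c ^ 4 ≤ 1 := by
    have : 0 ≤ 4 * k * t * c ^ 4 := by positivity
    linarith
  simpa [odeBarrier] using mul_le_mul_of_nonneg_left
    (Real.one_le_rpow_of_pos_of_le_one_of_nonpos hpos hle (by norm_num)) hc

theorem le_odeBarrier_of_deriv_le {K M k c T : ℝ} {f f' : ℝ → ℝ} (hc : 0 < c) (hMc : M < c)
    (hk : 0 ≤ k) (hKk : K < k) (hT : 4 * k * T * c ^ 4 < 1)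
    (hcont : ContinuousOn f (Icc 0 T)) (hderiv : ∀ t ∈ Ioo 0 T, HasDerivAt f (f' t) t)
    (h0 : f 0 ≤ M) (hineq : ∀ t ∈ Ioo 0 T, M ≤ f t → f' t ≤ K * f t ^ 5) :
    ∀ t ∈ Icc 0 T, f t ≤ odeBarrier k c t := by
  have hpos : ∀ t ∈ Icc 0 T, 0 < 1 - 4 * k * t * c ^ 4 := fun t ht => by
    have : 4 * k * t * c ^ 4 ≤ 4 * k * T * c ^ 4 := by gcongr; exact ht.2
    linarith
  have hB : ∀ t ∈ Icc 0 T, HasDerivAt (odeBarrier k c) (k * odeBarrier k c t ^ 5) t :=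
    fun t ht => hasDerivAt_odeBarrier (hpos t ht)
  refine image_le_of_deriv_lt_deriv_boundary_of_lt hcont hderiv
    (fun t ht => (hB t ht).continuousAt.continuousWithinAt)
    (fun t ht => hB t (Ioo_subset_Icc_self ht)) (by rw [odeBarrier_zero]; linarith) ?_
  intro t ht hft
  have hct : c ≤ f t := hft ▸ le_odeBarrier hk hc.le ht.1.le (hpos t (Ioo_subset_Icc_self ht))
  have hf5 : 0 < f t ^ 5 := pow_pos (hc.trans_le hct) 5
  calc f' t ≤ K * f t ^ 5 := hineq t ht (hMc.le.trans hct)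
    _ < k * f t ^ 5 := mul_lt_mul_of_pos_right hKk hf5
    _ = k * odeBarrier k c t ^ 5 := by rw [hft]

theorem maximum_principle_ode_comparison (K M T : ℝ) (hK : 0 < K) (hM : 0 < M)
    (f f' : ℝ → ℝ)
    (hcont : ContinuousOn f (Set.Icc 0 T))
    (hderiv : ∀ t ∈ Set.Ioo (0 : ℝ) T, HasDerivAt f (f' t) t)
    (h0 : f 0 ≤ M)
    (hineq : ∀ t ∈ Set.Ioo (0 : ℝ) T, M ≤ f t → f' t ≤ K * f t ^ 5)
    (hT : 4 * K * T * M ^ 4 < 1 / 2) :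
    ∀ t ∈ Set.Icc (0 : ℝ) T,
      f t ≤ M * (1 - 4 * K * t * M ^ 4) ^ (-(1 : ℝ) / 4) := by
  intro t ht
  have hbase : 0 < 1 - 4 * K * t * M ^ 4 := by
    have : 4 * K * t * M ^ 4 ≤ 4 * K * T * M ^ 4 := by gcongr; exact ht.2
    linarith
  have hlim : Tendsto (fun δ => odeBarrier (K + δ) (M + δ) t) (𝓝[>] 0)
      (𝓝 (odeBarrier K M t)) := by
    have : ContinuousAt (fun δ => odeBarrier (K + δ) (M + δ) t) 0 := by
      refine ContinuousAt.mul (by fun_prop) (ContinuousAt.rpow_const (by fun_prop) ?_)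
      simpa using Or.inl hbase.ne'
    simpa using this.continuousWithinAt.tendsto
  have hsmall : ∀ᶠ δ in 𝓝 (0 : ℝ), 4 * (K + δ) * T * (M + δ) ^ 4 < 1 :=
    (by fun_prop : ContinuousAt (fun δ : ℝ => 4 * (K + δ) * T * (M + δ) ^ 4) 0).eventually_lt_const
      (by simpa using hT.trans one_half_lt_one)
  refine ge_of_tendsto hlim ?_
  filter_upwards [nhdsWithin_le_nhds hsmall, self_mem_nhdsWithin] with δ hδT (hδ : 0 < δ)
  exact le_odeBarrier_of_deriv_le (by linarith) (by linarith) (by linarith) (by linarith) hδT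
    hcont hderiv h0 hineq t ht
end
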